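/- For n ≥ 3, |C(n)| = |B(n)| + |S(n)|, where C(n) is the set of zero-free degree sequences of length n with smallest part exactly 1, B(n) the subset of C(n) with largest part exactly n-1, and S(n) the set of zero-free degree sequences of length n with largest part exactly n-2. -/

import Mathlib

/-- A function `d : Fin n → ℕ` is graphic if it is the degree sequence of a
simple undirected graph on `n` vertices. -/
def Graphic (n : ℕ) (d : Fin n → ℕ) : Prop :=
  ∃ G : SimpleGraph (Fin n), ∀ v, (G.neighborSet v).ncard = d v

/-- Zero-free degree sequences of length `n` (non-increasing, positive, graphic). -/
def D (n : ℕ) : Set (Fin n → ℕ) :=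
  {d | Antitone d ∧ (∀ i, 0 < d i) ∧ Graphic n d}

/-- Degree sequences of length `n` allowing zero terms. -/
def D0 (n : ℕ) : Set (Fin n → ℕ) :=
  {d | Antitone d ∧ Graphic n d}
/-- Zero-free degree sequences of length n with smallest part exactly 1. -/
def C (n : ℕ) : Set (Fin n → ℕ) := {d | d ∈ D n ∧ ∃ i, d i = 1}

/-- Subset of C n with largest part exactly n-1. -/
def B (n : ℕ) : Set (Fin n → ℕ) := {d | d ∈ D n ∧ (∃ i, d i = n - 1) ∧ ∃ i, d i = 1}

/-- Zero-free degree sequences of length n with largest part exactly n-2. -/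
def S (n : ℕ) : Set (Fin n → ℕ) :=
  {d | d ∈ D n ∧ (∀ i, d i ≤ n - 2) ∧ ∃ i, d i = n - 2}


/-!
Every degree is at most `n - 1`, so `C(n) \ B(n)` is the set `W(n)` of sequences in `C(n)` with
largest part at most `n - 2`. Complementing the graph turns the degree sequence `d` into
`i ↦ n - 1 - d (rev i)` (reversed to stay non-increasing); this involution swaps the conditions
"smallest part 1, largest part at most `n - 2`" and "positive, largest part `n - 2`", so it is a
bijection `W(n) ≃ S(n)`.
-/

lemma SimpleGraph.ncard_neighborSet_eq_degree {V : Type*} [Fintype V] (G : SimpleGraph V)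
    [DecidableRel G.Adj] (v : V) :
    (G.neighborSet v).ncard = G.degree v := by
  rw [Set.ncard_eq_toFinset_card', Set.toFinset_card, G.card_neighborSet_eq_degree]

lemma Graphic.le_sub_one {n : ℕ} {d : Fin n → ℕ} (hd : Graphic n d) (i : Fin n) :
    d i ≤ n - 1 := by
  classical
  obtain ⟨G, hG⟩ := hd
  have := G.degree_lt_card_verts i
  rw [Fintype.card_fin] at this
  rw [← hG i, G.ncard_neighborSet_eq_degree]
  omega

lemma D_finite (n : ℕ) : (D n).Finite :=
  (Set.Finite.pi' fun _ => Set.finite_Iic (n - 1)).subset fun _ hd i => hd.2.2.le_sub_one i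

def degCompl (n : ℕ) (d : Fin n → ℕ) : Fin n → ℕ := fun i => n - 1 - d i.rev

@[simp]
lemma degCompl_apply_rev (n : ℕ) (d : Fin n → ℕ) (i : Fin n) :
    degCompl n d i.rev = n - 1 - d i := by
  simp [degCompl]

lemma degCompl_degCompl {n : ℕ} {d : Fin n → ℕ} (hd : ∀ i, d i ≤ n - 1) :
    degCompl n (degCompl n d) = d := by
  funext i
  have := hd i
  simp only [degCompl, Fin.rev_rev]
  omega

lemma Antitone.degCompl {n : ℕ} {d : Fin n → ℕ} (hd : Antitone d) : Antitone (degCompl n d) :=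
  fun _ _ hij => Nat.sub_le_sub_left (hd (Fin.rev_le_rev.mpr hij)) _

lemma Graphic.degCompl {n : ℕ} {d : Fin n → ℕ} (hd : Graphic n d) :
    Graphic n (degCompl n d) := by
  classical
  obtain ⟨G, hG⟩ := hd
  refine ⟨Gᶜ.comap Fin.rev, fun v => ?_⟩
  have hnbr : (Gᶜ.comap Fin.rev).neighborSet v = Fin.rev '' Gᶜ.neighborSet v.rev := by
    ext w
    simp only [SimpleGraph.mem_neighborSet, SimpleGraph.comap_adj, Set.mem_image]
    exact ⟨fun h => ⟨w.rev, h, w.rev_rev⟩, by rintro ⟨u, hu, rfl⟩; rwa [Fin.rev_rev]⟩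
  rw [hnbr, Fin.rev_injective.injOn.ncard_image, SimpleGraph.ncard_neighborSet_eq_degree,
    SimpleGraph.degree_compl, Fintype.card_fin, ← SimpleGraph.ncard_neighborSet_eq_degree, hG]
  rfl

lemma degCompl_mem_D {n : ℕ} {d : Fin n → ℕ} (hd : d ∈ D n) (hle : ∀ i, d i ≤ n - 2) :
    degCompl n d ∈ D n := by
  refine ⟨hd.1.degCompl, fun i => ?_, hd.2.2.degCompl⟩
  have := hle i.rev
  have := hd.2.1 i.rev
  show 0 < n - 1 - d i.rev
  omega

def W (n : ℕ) : Set (Fin n → ℕ) := {d | d ∈ D n ∧ (∃ i, d i = 1) ∧ ∀ i, d i ≤ n - 2}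

lemma B_subset_C (n : ℕ) : B n ⊆ C n := fun _ hd => ⟨hd.1, hd.2.2⟩

lemma C_diff_B (n : ℕ) : C n \ B n = W n := by
  ext d
  constructor
  · rintro ⟨⟨hD, h1⟩, hnB⟩
    refine ⟨hD, h1, fun i => ?_⟩
    have hle := hD.2.2.le_sub_one i
    have : d i ≠ n - 1 := fun h => hnB ⟨hD, ⟨i, h⟩, h1⟩
    omega
  · rintro ⟨hD, h1, hle⟩
    refine ⟨⟨hD, h1⟩, fun hB => ?_⟩
    obtain ⟨i, hi⟩ := hB.2.1
    have := hle i
    have := hD.2.1 i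
    omega

lemma mapsTo_degCompl_W_S (n : ℕ) : Set.MapsTo (degCompl n) (W n) (S n) := by
  rintro d ⟨hD, ⟨i₀, hi₀⟩, hle⟩
  refine ⟨degCompl_mem_D hD hle, fun i => ?_, ⟨i₀.rev, by simp [hi₀]; omega⟩⟩
  have := hD.2.1 i.rev
  show n - 1 - d i.rev ≤ n - 2
  omega

lemma mapsTo_degCompl_S_W (n : ℕ) : Set.MapsTo (degCompl n) (S n) (W n) := by
  rintro d ⟨hD, hle, ⟨i₀, hi₀⟩⟩
  have := hD.2.1 i₀
  refine ⟨degCompl_mem_D hD hle, ⟨i₀.rev, by simp [hi₀]; omega⟩, fun i => ?_⟩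
  have := hD.2.1 i.rev
  show n - 1 - d i.rev ≤ n - 2
  omega

lemma leftInvOn_degCompl_D (n : ℕ) : Set.LeftInvOn (degCompl n) (degCompl n) (D n) :=
  fun _ hd => degCompl_degCompl hd.2.2.le_sub_one

lemma bijOn_degCompl_W_S (n : ℕ) : Set.BijOn (degCompl n) (W n) (S n) :=
  Set.InvOn.bijOn
    ⟨(leftInvOn_degCompl_D n).mono fun _ hd => hd.1, (leftInvOn_degCompl_D n).mono fun _ hd => hd.1⟩
    (mapsTo_degCompl_W_S n) (mapsTo_degCompl_S_W n)

theorem card_C_eq_general (n : ℕ) :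
    (C n).ncard = (B n).ncard + (S n).ncard := by
  have hCfin : (C n).Finite := (D_finite n).subset fun _ hd => hd.1
  rw [← Set.ncard_sdiff_add_ncard_of_subset (B_subset_C n) hCfin, C_diff_B,
    (bijOn_degCompl_W_S n).ncard_eq, add_comm]

theorem card_C_eq (n : ℕ) (hn : 3 ≤ n) :
    (C n).ncard = (B n).ncard + (S n).ncard :=
  card_C_eq_general n
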